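/- Theorem (pit-climbing code length). For every rooted plane tree T with n(T) = n nodes and l(T) = l leaves, the binary pit-climbing code PC(T) has length exactly n + 2l − 3 bits. -/

import Mathlib

/-- A rooted plane tree: a root node together with a finite ordered list of
subtrees, the subtrees rooted at the children of the root. -/
inductive PTree : Type
  | node : List PTree → PTree

namespace PTree

/-- The subtrees rooted at the children of the root. -/
def children : PTree → List PTree
  | node ts => ts

mutual
/-- Number of nodes of a rooted plane tree. -/
def numNodes : PTree → ℕ
  | node ts => 1 + numNodesList ts
def numNodesList : List PTree → ℕ
  | [] => 0
  | t :: ts => numNodes t + numNodesList ts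
end

mutual
/-- Number of leaves (nodes with no children); a single-node tree has one leaf. -/
def numLeaves : PTree → ℕ
  | node [] => 1
  | node (t :: ts) => numLeaves t + numLeavesList ts
def numLeavesList : List PTree → ℕ
  | [] => 0
  | t :: ts => numLeaves t + numLeavesList ts
end

/-- Symbols of the ternary pit-climbing code: ↓, ↑, ⇑. -/
inductive PCSym : Type
  | down   -- ↓ : fall to the leftmost unexplored leaf
  | up     -- ↑ : climb to a never-before-visited node
  | upSeen -- ⇑ : climb to an already-visited node
deriving DecidableEq

mutual
/-- Ternary pit-climbing code TPC: empty for a single node; `TPC t ++ [↑]` for a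
single child subtree `t`; `TPC t₁ ++ [↑,↓] ++ TPC t₂ ++ [⇑,↓] ++ ⋯ ++ [⇑,↓] ++ TPC tₖ ++ [⇑]`
for children subtrees `t₁, …, tₖ`, `k ≥ 2`. -/
def TPC : PTree → List PCSym
  | node [] => []
  | node [t] => TPC t ++ [.up]
  | node (t₁ :: t₂ :: ts) => TPC t₁ ++ [.up, .down] ++ TPCRest (t₂ :: ts)
/-- TPC contribution of the second-onwards children subtrees. -/
def TPCRest : List PTree → List PCSym
  | [] => []
  | [t] => TPC t ++ [.upSeen]
  | t :: ts => TPC t ++ [.upSeen, .down] ++ TPCRest ts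
end

/-- Binary encoding of the pit-climbing symbols: ↓ ↦ 0, ⇑ ↦ 00, ↑ ↦ 1. -/
def pcBits : PCSym → List Bool
  | .down => [false]
  | .upSeen => [false, false]
  | .up => [true]

/-- Binary pit-climbing code PC. -/
def PC (T : PTree) : List Bool := (TPC T).flatMap pcBits

lemma numNodesList_append (a b : List PTree) :
    numNodesList (a ++ b) = numNodesList a + numNodesList b := by
  induction a with
  | nil => simp [numNodesList]
  | cons t ts ih => simp [numNodesList, ih]; ring

lemma numNodesList_children_flatten (l : List PTree) :
    numNodesList ((l.map children).flatten) + l.length = numNodesList l := by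
  induction l with
  | nil => simp [numNodesList]
  | cons t ts ih =>
      cases t with
      | node cs =>
        simp only [List.map_cons, List.flatten_cons, numNodesList_append,
          List.length_cons, numNodesList, children, numNodes]
        omega

/-- Breadth-first list of the sibling groups of a tree, starting from the list
`gs` of sibling groups at the current level: the groups of the current level
followed by the groups of children on the levels below, level by level and
left to right within each level. -/
def bfsGroups (gs : List (List PTree)) : List (List PTree) :=
  if h : gs.flatten.isEmpty then []
  else gs ++ bfsGroups (gs.flatten.map children)
termination_by numNodesList gs.flatten
decreasing_by
  have h1 := numNodesList_children_flatten gs.flatten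
  have h2 : gs.flatten.length ≠ 0 := by
    intro hh
    rw [List.length_eq_zero_iff] at hh
    exact h (List.isEmpty_iff.mpr hh)
  omega

/-- Symbols of the ternary tunnel-digging code: ←, →, ⇒. -/
inductive TDSym : Type
  | leaf   -- ← : a leaf node
  | inner  -- → : a node with at least one child
  | tunnel -- ⇒ : transition between consecutive non-sibling nodes
deriving DecidableEq

/-- The symbols written for one sibling group: ← for each leaf, → for each
node with at least one child. -/
def groupSyms (g : List PTree) : List TDSym :=
  g.map (fun t => if t.children.isEmpty then .leaf else .inner)

/-- Ternary tunnel-digging code TTD: the non-root nodes in breadth-first order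
(by increasing depth, left to right within each depth), ← for each leaf and →
for each internal node, with ⇒ inserted between every two consecutive
non-sibling nodes. -/
def TTD (T : PTree) : List TDSym :=
  List.intercalate [TDSym.tunnel]
    (((bfsGroups [T.children]).filter (fun g => ¬ g.isEmpty)).map groupSyms)

/-- Binary encoding of the tunnel-digging symbols: ⇒ ↦ 0, → ↦ 00, ← ↦ 1. -/
def tdBits : TDSym → List Bool
  | .tunnel => [false]
  | .inner => [false, false]
  | .leaf => [true]

/-- Binary tunnel-digging code TD. -/
def TD (T : PTree) : List Bool := (TTD T).flatMap tdBits

/-- TreeExplorer code TE: `0·PC(T)` if `l(T) < n(T)/2`, and `1·TD(T)` otherwise. -/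
def TE (T : PTree) : List Bool :=
  if 2 * numLeaves T < numNodes T then false :: PC T else true :: TD T

end PTree


/-! Every non-root node is climbed to exactly once, by a `↑` (1 bit) if it is a first child and by
a `⇑` (2 bits) otherwise, and each of the `l - 1` later children is reached by one `↓` (1 bit).
With `n - l` internal nodes this gives `(n - l) + 2 (l - 1) + (l - 1) = n + 2 l - 3` bits. The
induction carries this as `|PC T| + 3 = n + 2 l`, together with `|code| + 1 = n + 2 l` for the
code of a nonempty list of later siblings. -/

namespace PTree

mutual
theorem length_PC_add_three (T : PTree) : (PC T).length + 3 = numNodes T + 2 * numLeaves T := by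
  match T with
  | .node [] => simp [PC, TPC, numNodes, numNodesList, numLeaves]
  | .node [t] =>
    have ih := length_PC_add_three t
    simp only [PC, TPC, pcBits, List.flatMap_append, List.flatMap_cons, List.flatMap_nil,
      List.length_append, List.length_cons, List.length_nil, numNodes, numNodesList, numLeaves,
      numLeavesList] at ih ⊢
    omega
  | .node (t₁ :: t₂ :: ts) =>
    have ih₁ := length_PC_add_three t₁
    have ih₂ := length_flatMap_TPCRest (t₂ :: ts) (List.cons_ne_nil _ _)
    simp only [PC, TPC, pcBits, List.flatMap_append, List.flatMap_cons, List.flatMap_nil,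
      List.length_append, List.length_cons, List.length_nil, numNodes, numNodesList, numLeaves,
      numLeavesList] at ih₁ ih₂ ⊢
    omega

theorem length_flatMap_TPCRest (ts : List PTree) (hts : ts ≠ []) :
    ((TPCRest ts).flatMap pcBits).length + 1 = numNodesList ts + 2 * numLeavesList ts := by
  match ts with
  | [t] =>
    have ih := length_PC_add_three t
    simp only [PC, TPCRest, pcBits, List.flatMap_append, List.flatMap_cons, List.flatMap_nil,
      List.length_append, List.length_cons, List.length_nil, numNodesList, numLeavesList] at ih ⊢
    omega
  | t :: t' :: ts =>
    have ih₁ := length_PC_add_three t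
    have ih₂ := length_flatMap_TPCRest (t' :: ts) (List.cons_ne_nil _ _)
    simp only [PC, TPCRest, pcBits, List.flatMap_append, List.flatMap_cons, List.flatMap_nil,
      List.length_append, List.length_cons, List.length_nil, numNodesList,
      numLeavesList] at ih₁ ih₂ ⊢
    omega
end

end PTree

open PTree in
/-- **Pit-climbing code length.** For every rooted plane tree `T` with `n`
nodes and `l` leaves, the binary pit-climbing code `PC(T)` has length exactly
`n + 2l - 3` bits. -/
theorem pitClimbing_length (T : PTree) :
    (PC T).length = numNodes T + 2 * numLeaves T - 3 := by
  have := length_PC_add_three T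
  omega
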